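/- arXiv:2409.03732 — 2 statements merged into one kernel-verified Lean document; each statement's English description precedes it below -/
import Mathlib

section
/- For any partition X of Ω, the Shannon entropy H(X) = −Σ_{P ∈ X} p(P) log p(P) equals the sum of μ(S) over all atoms S crossed by X, i.e., H(X) = μ(ΔX) where ΔX := {S ⊆ Ω : |S| ≥ 2 and S is not contained in any single part of X}. -/
open Finset BigOperators

variable {Ω : Type*} [Fintype Ω] [DecidableEq Ω]

/-- Probability of a subset: `p(T) = Σ_{ω∈T} p(ω)`. -/
def pS (p : Ω → ℝ) (T : Finset Ω) : ℝ := ∑ ω ∈ T, p ω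

/-- `p(T) log p(T)` (with `0 log 0 = 0` since `Real.log 0 = 0`). -/
noncomputable def plog (p : Ω → ℝ) (T : Finset Ω) : ℝ := pS p T * Real.log (pS p T)

/-- The interior-loss measure of an atom `S`. -/
noncomputable def mu (p : Ω → ℝ) (S : Finset Ω) : ℝ :=
  ∑ T ∈ S.powerset.filter (· ≠ ∅), (-1 : ℝ) ^ (S.card - T.card) * plog p T

/-- `μ` of a set of atoms, extended additively. -/
noncomputable def muSet (p : Ω → ℝ) (R : Finset (Finset Ω)) : ℝ := ∑ S ∈ R, mu p S

/-- A partition `X` crosses an atom `S` when `S` meets at least two distinct parts. -/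
def crossed (X : Finpartition (univ : Finset Ω)) (S : Finset Ω) : Prop :=
  ∃ P ∈ X.parts, ∃ Q ∈ X.parts, P ≠ Q ∧ (S ∩ P).Nonempty ∧ (S ∩ Q).Nonempty

open scoped Classical in
/-- The content `ΔX`: set of atoms crossed by the partition `X`. -/
noncomputable def content (X : Finpartition (univ : Finset Ω)) : Finset (Finset Ω) :=
  (univ : Finset (Finset Ω)).filter (fun S => 2 ≤ S.card ∧ crossed X S)

/-- Shannon entropy of a partition. -/
noncomputable def Hent (p : Ω → ℝ) (X : Finpartition (univ : Finset Ω)) : ℝ :=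
  - ∑ P ∈ X.parts, pS p P * Real.log (pS p P)

/-- `X` refines `Z`: every part of `X` lies in a part of `Z`. -/
def refines (X Z : Finpartition (univ : Finset Ω)) : Prop :=
  ∀ P ∈ X.parts, ∃ Q ∈ Z.parts, P ⊆ Q

/-!
`μ` is the Möbius transform of `T ↦ p(T) log p(T)` on the Boolean lattice of subsets, so
summing `μ` over all subsets of `A` gives back `p(A) log p(A)`. Applied to `Ω`, where
`p(Ω) log p(Ω) = 0`, the total `μ`-mass of all atoms vanishes. A nonempty atom not crossed by `X`
lies in exactly one part `P`, and the atoms inside `P` carry total mass `p(P) log p(P)`;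
hence the crossed atoms carry `-Σ_P p(P) log p(P) = H(X)`.
-/

section Moebius

variable {α R : Type*} [DecidableEq α] [Ring R]

theorem sum_Icc_neg_one_pow_card_sub_card {T A : Finset α} (hTA : T ⊆ A) :
    ∑ S ∈ Icc T A, (-1 : R) ^ (#S - #T) = if T = A then 1 else 0 := by
  have hinj : Set.InjOn (T ∪ ·) ((A \ T).powerset : Set (Finset α)) := by
    intro U hU V hV hUV
    have hU := disjoint_of_subset_left (mem_powerset.mp hU) sdiff_disjoint
    have hV := disjoint_of_subset_left (mem_powerset.mp hV) sdiff_disjoint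
    simpa [union_sdiff_cancel_left hU.symm, union_sdiff_cancel_left hV.symm] using
      congrArg (· \ T) hUV
  rw [Icc_eq_image_powerset hTA, sum_image hinj]
  calc ∑ U ∈ (A \ T).powerset, (-1 : R) ^ (#(T ∪ U) - #T)
      = ((∑ U ∈ (A \ T).powerset, (-1 : ℤ) ^ #U : ℤ) : R) := by
        push_cast
        refine sum_congr rfl fun U hU => ?_
        rw [card_union_of_disjoint
          (disjoint_of_subset_left (mem_powerset.mp hU) sdiff_disjoint).symm,
          Nat.add_sub_cancel_left]
    _ = if T = A then 1 else 0 := by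
        have hAT : A ⊆ T ↔ T = A := ⟨hTA.antisymm, fun h => h ▸ subset_rfl⟩
        rw [sum_powerset_neg_one_pow_card]
        simp [hAT]

theorem sum_powerset_sum_powerset_neg_one_pow_mul (f : Finset α → R) (A : Finset α) :
    ∑ S ∈ A.powerset, ∑ T ∈ S.powerset, (-1 : R) ^ (#S - #T) * f T = f A := by
  rw [sum_comm' (t' := A.powerset) (s' := fun T => Icc T A)]
  · simp_rw [← sum_mul]
    rw [sum_congr rfl fun T hT => by rw [sum_Icc_neg_one_pow_card_sub_card (mem_powerset.mp hT)]]
    simp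
  · intro S T
    simp only [mem_powerset, mem_Icc]
    exact ⟨fun ⟨hSA, hTS⟩ => ⟨⟨hTS, hSA⟩, hTS.trans hSA⟩, fun ⟨⟨hTS, hSA⟩, _⟩ => ⟨hSA, hTS⟩⟩

end Moebius

section Mu

variable {α : Type*} (p : α → ℝ)

@[simp]
theorem plog_empty : plog p ∅ = 0 := by
  simp [plog, pS]

variable [DecidableEq α]

theorem mu_eq_sum_powerset (S : Finset α) :
    mu p S = ∑ T ∈ S.powerset, (-1 : ℝ) ^ (#S - #T) * plog p T :=
  sum_filter_of_ne fun T _ hT hempty => hT (by simp [hempty])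

@[simp]
theorem mu_empty : mu p ∅ = 0 := by
  simp [mu_eq_sum_powerset]

theorem sum_powerset_mu (A : Finset α) : ∑ S ∈ A.powerset, mu p S = plog p A := by
  simp_rw [mu_eq_sum_powerset]
  exact sum_powerset_sum_powerset_neg_one_pow_mul (plog p) A

theorem sum_filter_nonempty_mu (R : Finset (Finset α)) :
    ∑ S ∈ R with S.Nonempty, mu p S = ∑ S ∈ R, mu p S :=
  sum_filter_of_ne fun _ _ hS => nonempty_iff_ne_empty.mpr fun h => hS (h ▸ mu_empty p)

end Mu

theorem Finpartition.pairwiseDisjoint_filter_nonempty_powerset {α : Type*} [DecidableEq α]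
    {s : Finset α} (X : Finpartition s) :
    (X.parts : Set (Finset α)).PairwiseDisjoint fun P => P.powerset.filter Finset.Nonempty := by
  intro P hP Q hQ hPQ
  refine disjoint_left.mpr fun S hSP hSQ => ?_
  rw [mem_filter, mem_powerset] at hSP hSQ
  obtain ⟨a, ha⟩ := hSP.2
  exact hPQ (X.eq_of_mem_parts hP hQ (hSP.1 ha) (hSQ.1 ha))

section Crossed

variable (X : Finpartition (univ : Finset Ω))

theorem two_le_card_of_crossed {S : Finset Ω} (h : crossed X S) : 2 ≤ #S := by
  obtain ⟨P, hP, Q, hQ, hPQ, ⟨a, ha⟩, ⟨b, hb⟩⟩ := h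
  rw [mem_inter] at ha hb
  refine one_lt_card.mpr ⟨a, ha.1, b, hb.1, fun hab => hPQ ?_⟩
  exact X.eq_of_mem_parts hP hQ ha.2 (hab ▸ hb.2)

theorem not_crossed_iff_exists_subset {S : Finset Ω} (hS : S.Nonempty) :
    ¬ crossed X S ↔ ∃ P ∈ X.parts, S ⊆ P := by
  have hpart (x : Ω) : X.part x ∈ X.parts := X.part_mem.mpr (mem_univ x)
  have hself (x : Ω) : x ∈ X.part x := X.mem_part_self.mpr (mem_univ x)
  constructor
  · intro hnc
    obtain ⟨a, ha⟩ := hS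
    refine ⟨X.part a, hpart a, fun b hb => ?_⟩
    by_contra hbP
    exact hnc ⟨X.part a, hpart a, X.part b, hpart b, fun h => hbP (h ▸ hself b),
      ⟨a, mem_inter.mpr ⟨ha, hself a⟩⟩, ⟨b, mem_inter.mpr ⟨hb, hself b⟩⟩⟩
  · rintro ⟨P, hP, hSP⟩ ⟨Q, hQ, Q', hQ', hQQ', ⟨a, ha⟩, ⟨b, hb⟩⟩
    rw [mem_inter] at ha hb
    exact hQQ' ((X.eq_of_mem_parts hQ hP ha.2 (hSP ha.1)).trans
      (X.eq_of_mem_parts hQ' hP hb.2 (hSP hb.1)).symm)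

theorem content_eq_filter_crossed [DecidablePred (crossed X)] :
    content X = univ.filter (crossed X) := by
  ext S
  simp only [content, mem_filter, mem_univ, true_and, and_iff_right_iff_imp]
  exact two_le_card_of_crossed X

theorem filter_not_crossed_nonempty_eq_biUnion [DecidablePred (crossed X)] :
    (univ.filter fun S => ¬ crossed X S ∧ S.Nonempty) =
      X.parts.biUnion fun P => P.powerset.filter Finset.Nonempty := by
  ext S
  simp only [mem_filter, mem_univ, true_and, mem_biUnion, mem_powerset]
  constructor
  · rintro ⟨hnc, hS⟩
    obtain ⟨P, hP, hSP⟩ := (not_crossed_iff_exists_subset X hS).mp hnc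
    exact ⟨P, hP, hSP, hS⟩
  · rintro ⟨P, hP, hSP, hS⟩
    exact ⟨(not_crossed_iff_exists_subset X hS).mpr ⟨P, hP, hSP⟩, hS⟩

theorem sum_not_crossed_mu (p : Ω → ℝ) [DecidablePred (crossed X)] :
    ∑ S with ¬ crossed X S, mu p S = ∑ P ∈ X.parts, plog p P := by
  rw [← sum_filter_nonempty_mu, filter_filter, filter_not_crossed_nonempty_eq_biUnion,
    sum_biUnion X.pairwiseDisjoint_filter_nonempty_powerset]
  exact sum_congr rfl fun P _ => by rw [sum_filter_nonempty_mu, sum_powerset_mu]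

end Crossed

theorem entropy_eq_muSet_content_general {Ω : Type*} [Fintype Ω] [DecidableEq Ω] (p : Ω → ℝ)
    (hsum : ∑ ω, p ω = 1)
    (X : Finpartition (univ : Finset Ω)) :
    Hent p X = muSet p (content X) := by
  classical
  have htotal : ∑ S, mu p S = 0 := by
    rw [← powerset_univ, sum_powerset_mu]
    simp [plog, pS, hsum]
  rw [← sum_filter_add_sum_filter_not univ (crossed X), ← content_eq_filter_crossed,
    sum_not_crossed_mu] at htotal
  rw [Hent, muSet]
  simp only [plog] at htotal
  linarith

theorem entropy_eq_muSet_content {Ω : Type*} [Fintype Ω] [DecidableEq Ω] (p : Ω → ℝ)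
    (hp : ∀ ω, 0 ≤ p ω) (hsum : ∑ ω, p ω = 1)
    (X : Finpartition (univ : Finset Ω)) :
    Hent p X = muSet p (content X) :=
  entropy_eq_muSet_content_general p hsum X
end

section
/- A set R of atoms of Ω is representable (R = ΔZ for some partition Z) if and only if (i) the relation ω ~ ω′ defined by 'ω = ω′ or {ω, ω′} ∉ R' is an equivalence relation on Ω, and (ii) for every S with |S| ≥ 2, S ∈ R if and only if there exist ω, ω′ ∈ S with {ω, ω′} ∈ R. -/
open Finset BigOperators

variable {Ω : Type*} [Fintype Ω] [DecidableEq Ω]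

/-!
Both conditions say that `R` is determined by its pairs. For `R = ΔZ` the pair `{a, b}` lies in
`R` iff `a` and `b` lie in different parts, which gives (i) and (ii). Conversely, (i) makes the
classes of `~` a partition `Z`, and `ΔZ` and `R` then contain the same pairs, hence by (ii) the
same atoms.
-/

section PairGenerated

variable {α : Type*} [DecidableEq α]

lemma eq_of_forall_pair_mem_iff {R R' : Finset (Finset α)}
    (hR : ∀ S ∈ R, 2 ≤ S.card) (hR' : ∀ S ∈ R', 2 ≤ S.card)
    (hgen : ∀ S : Finset α, 2 ≤ S.card →
      (S ∈ R ↔ ∃ a ∈ S, ∃ b ∈ S, ({a, b} : Finset α) ∈ R))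
    (hgen' : ∀ S : Finset α, 2 ≤ S.card →
      (S ∈ R' ↔ ∃ a ∈ S, ∃ b ∈ S, ({a, b} : Finset α) ∈ R'))
    (hpair : ∀ a b : α, ({a, b} : Finset α) ∈ R ↔ ({a, b} : Finset α) ∈ R') :
    R = R' := by
  ext S
  by_cases hS : 2 ≤ S.card
  · simp only [hgen S hS, hgen' S hS, hpair]
  · exact iff_of_false (fun h => hS (hR S h)) (fun h => hS (hR' S h))

lemma ne_of_pair_mem {R : Finset (Finset α)} (hR : ∀ S ∈ R, 2 ≤ S.card) {a b : α}
    (h : ({a, b} : Finset α) ∈ R) : a ≠ b := by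
  rintro rfl
  simpa using hR _ h

end PairGenerated

section Content

lemma mem_content_iff_exists_part_ne (Z : Finpartition (univ : Finset Ω)) (S : Finset Ω) :
    S ∈ content Z ↔ 2 ≤ S.card ∧ ∃ a ∈ S, ∃ b ∈ S, Z.part a ≠ Z.part b := by
  simp only [content, mem_filter, mem_univ, true_and, and_congr_right_iff]
  refine fun _ => ⟨?_, ?_⟩
  · rintro ⟨P, hP, Q, hQ, hPQ, ⟨a, ha⟩, ⟨b, hb⟩⟩
    rw [mem_inter] at ha hb
    exact ⟨a, ha.1, b, hb.1, by rwa [Z.part_eq_of_mem hP ha.2, Z.part_eq_of_mem hQ hb.2]⟩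
  · rintro ⟨a, ha, b, hb, hab⟩
    exact ⟨Z.part a, Z.part_mem.2 (mem_univ a), Z.part b, Z.part_mem.2 (mem_univ b), hab,
      ⟨a, mem_inter.2 ⟨ha, Z.mem_part (mem_univ a)⟩⟩,
      ⟨b, mem_inter.2 ⟨hb, Z.mem_part (mem_univ b)⟩⟩⟩

lemma two_le_card_of_mem_content {Z : Finpartition (univ : Finset Ω)} {S : Finset Ω}
    (h : S ∈ content Z) : 2 ≤ S.card :=
  ((mem_content_iff_exists_part_ne Z S).1 h).1

lemma pair_mem_content_iff (Z : Finpartition (univ : Finset Ω)) (a b : Ω) :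
    ({a, b} : Finset Ω) ∈ content Z ↔ Z.part a ≠ Z.part b := by
  rw [mem_content_iff_exists_part_ne]
  by_cases hab : a = b
  · subst hab
    simp
  · simp only [card_pair hab, le_refl, true_and, mem_insert, mem_singleton,
      exists_eq_or_imp, exists_eq_left, ne_eq, not_true_eq_false, false_or]
    rw [eq_comm (a := Z.part b), or_false, or_self]

lemma mem_content_iff_exists_pair_mem (Z : Finpartition (univ : Finset Ω)) {S : Finset Ω}
    (hS : 2 ≤ S.card) :
    S ∈ content Z ↔ ∃ a ∈ S, ∃ b ∈ S, ({a, b} : Finset Ω) ∈ content Z := by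
  simp only [mem_content_iff_exists_part_ne Z S, hS, true_and, pair_mem_content_iff]

lemma equivalence_content (Z : Finpartition (univ : Finset Ω)) :
    Equivalence (fun a b : Ω => a = b ∨ ({a, b} : Finset Ω) ∉ content Z) := by
  have hrel : (fun a b : Ω => a = b ∨ ({a, b} : Finset Ω) ∉ content Z) =
      fun a b => Z.part a = Z.part b := by
    ext a b
    rw [pair_mem_content_iff, not_not, or_iff_right_of_imp (congrArg Z.part)]
  rw [hrel]
  exact ⟨fun _ => rfl, Eq.symm, Eq.trans⟩

end Content

lemma Finpartition.part_ofSetoid_eq_iff {α : Type*} [Fintype α] [DecidableEq α]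
    (s : Setoid α) [DecidableRel s.r] (a b : α) :
    (Finpartition.ofSetoid s).part a = (Finpartition.ofSetoid s).part b ↔ s a b := by
  rw [← (Finpartition.ofSetoid s).mem_part_iff_part_eq_part (mem_univ a) (mem_univ b),
    Finpartition.mem_part_ofSetoid_iff_rel]
  exact ⟨s.symm, s.symm⟩

theorem representable_iff {Ω : Type*} [Fintype Ω] [DecidableEq Ω]
    (R : Finset (Finset Ω)) (hR : ∀ S ∈ R, 2 ≤ S.card) :
    (∃ Z : Finpartition (univ : Finset Ω), content Z = R) ↔
      (Equivalence (fun a b : Ω => a = b ∨ ({a, b} : Finset Ω) ∉ R) ∧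
        ∀ S : Finset Ω, 2 ≤ S.card →
          (S ∈ R ↔ ∃ a ∈ S, ∃ b ∈ S, ({a, b} : Finset Ω) ∈ R)) := by
  constructor
  · rintro ⟨Z, rfl⟩
    exact ⟨equivalence_content Z, fun S hS => mem_content_iff_exists_pair_mem Z hS⟩
  · rintro ⟨hequiv, hgen⟩
    classical
    let Z := Finpartition.ofSetoid ⟨_, hequiv⟩
    refine ⟨Z, eq_of_forall_pair_mem_iff (fun _ => two_le_card_of_mem_content) hR
      (fun _ => mem_content_iff_exists_pair_mem Z) hgen fun a b => ?_⟩
    rw [pair_mem_content_iff, Ne, Finpartition.part_ofSetoid_eq_iff]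
    show ¬(a = b ∨ _) ↔ _
    have := ne_of_pair_mem hR (a := a) (b := b)
    tauto
end
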